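/- Let k ≥ 2, ℓ ≥ 4, r ≥ 3 be integers and n ≥ 4k²ℓ²(kℓ+r)(⌊ℓ/2⌋+1)·C(ℓ,⌊ℓ/2⌋). Let G be a kP_ℓ-free graph on n vertices with e(G) ≥ (k⌊ℓ/2⌋ − 1)(n − k⌊ℓ/2⌋ + 1), and set n_k = (n/3 − C(ℓ,2))/((⌈ℓ/2⌉+1)·C(ℓ,⌊ℓ/2⌋)) + kℓ. Let A be the set of all vertices of G that belong to some set S ⊆ V(G) with |S| = ⌊ℓ/2⌋ whose common neighborhood outside S has size at least n_k. Then for every X ⊆ A with |X| < ⌊ℓ/2⌋, there exist k−1 pairwise disjoint sets S₁,…,S_{k−1} ⊆ A∖X, each of size ⌊ℓ/2⌋ and each with common neighborhood outside itself of size at least n_k. -/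

import Mathlib

open SimpleGraph

/-- `G` contains a (not necessarily induced) subgraph copy of `H`. -/
def GContains {V W : Type*} (G : SimpleGraph V) (H : SimpleGraph W) : Prop :=
  ∃ f : W ↪ V, ∀ a b, H.Adj a b → G.Adj (f a) (f b)

/-- The number of edges of a graph. -/
noncomputable def eCount {V : Type*} (G : SimpleGraph V) : ℕ := G.edgeSet.ncard

/-- The Turán number of a "freeness" predicate `P` : the maximum number of edges of a
graph on `n` vertices satisfying `P`. -/
noncomputable def exNum (n : ℕ) (P : SimpleGraph (Fin n) → Prop) : ℕ :=
  sSup {m | ∃ G : SimpleGraph (Fin n), P G ∧ eCount G = m}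

/-- The disjoint union of `k` copies of the path on `ℓ` vertices. -/
def kPaths (k ℓ : ℕ) : SimpleGraph (Fin k × Fin ℓ) where
  Adj x y := x.1 = y.1 ∧ ((x.2 : ℕ) + 1 = (y.2 : ℕ) ∨ (y.2 : ℕ) + 1 = (x.2 : ℕ))
  symm := ⟨fun x y h => ⟨h.1.symm, h.2.symm⟩⟩
  loopless := ⟨fun x h => by obtain ⟨-, h⟩ := h; omega⟩

/-- The linear forest with one path on `len i` vertices for each `i ∈ s`. -/
def linearForest (s : Finset ℕ) (len : ℕ → ℕ) :
    SimpleGraph {p : ℕ × ℕ // p.1 ∈ s ∧ p.2 < len p.1} where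
  Adj x y := x.val.1 = y.val.1 ∧ (x.val.2 + 1 = y.val.2 ∨ y.val.2 + 1 = x.val.2)
  symm := ⟨fun x y h => ⟨h.1.symm, h.2.symm⟩⟩
  loopless := ⟨fun x h => by obtain ⟨-, h⟩ := h; omega⟩

/-- The join `I_a + M_m` of an independent set of `a` vertices with a perfect matching
on `2m` vertices (vertices `2t` and `2t+1` are matched). -/
def joinIM (a m : ℕ) : SimpleGraph (Fin a ⊕ Fin (2 * m)) where
  Adj x y :=
    match x, y with
    | Sum.inl _, Sum.inr _ => True
    | Sum.inr _, Sum.inl _ => True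
    | Sum.inl _, Sum.inl _ => False
    | Sum.inr i, Sum.inr j => i ≠ j ∧ (i : ℕ) / 2 = (j : ℕ) / 2
  symm := by
    constructor
    rintro (x | x) (y | y) h
    · exact h.elim
    · trivial
    · trivial
    · exact ⟨h.1.symm, h.2.symm⟩
  loopless := by
    constructor
    rintro (x | x) h
    · exact h
    · exact h.1 rfl

/-- `E'` is an edge control set of `F`: a set of edges of `F` such that every other edge of
`F` shares an endpoint with some edge of `E'`. -/
def IsEdgeControlSet {V : Type*} (F : SimpleGraph V) (E' : Finset (Sym2 V)) : Prop :=
  (E' : Set (Sym2 V)) ⊆ F.edgeSet ∧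
    ∀ e ∈ F.edgeSet, e ∉ E' → ∃ e' ∈ E', ∃ v, v ∈ e ∧ v ∈ e'

/-- The edge control number `β₁(F)`: the minimum size of an edge control set of `F`. -/
noncomputable def edgeControlNumber {V : Type*} (F : SimpleGraph V) : ℕ :=
  sInf {m | ∃ E' : Finset (Sym2 V), IsEdgeControlSet F E' ∧ E'.card = m}

/-- The number of triangles (copies of `K₃`) in `F`. -/
noncomputable def triCount {V : Type*} (F : SimpleGraph V) : ℕ :=
  {t : Finset V | F.IsNClique 3 t}.ncard

/-- `G` contains no member of the family `𝒢₁(F) = {F[V(F) ∖ S] : S ⊆ V(F), F[S] edgeless}`. -/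
def G1FamFree {VF V : Type*} (F : SimpleGraph VF) (G : SimpleGraph V) : Prop :=
  ∀ S : Set VF, (∀ a ∈ S, ∀ b ∈ S, ¬ F.Adj a b) → ¬ GContains G (F.induce Sᶜ)

/-- `G` contains no member of the family `𝒢₂(F) = {F[V(F) ∖ S] : S ⊆ V(F), e(F[S]) ≤ 1}`. -/
def G2FamFree {VF V : Type*} (F : SimpleGraph VF) (G : SimpleGraph V) : Prop :=
  ∀ S : Set VF, eCount (F.induce S) ≤ 1 → ¬ GContains G (F.induce Sᶜ)

/-- `G` contains no member of the family
`𝓗ᵢ(F) = {F[V(F) ∖ S] : S ⊆ V(F), Δ(F[S]) ≤ 1, e(F[S]) ≤ i}`. -/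
def HiFamFree {VF V : Type*} (F : SimpleGraph VF) (i : ℕ) (G : SimpleGraph V) : Prop :=
  ∀ S : Set VF, (∀ v ∈ S, (F.neighborSet v ∩ S).ncard ≤ 1) →
    eCount (F.induce S) ≤ i → ¬ GContains G (F.induce Sᶜ)

/-- `G` contains no member of the family `𝓗(F) = {F[V(F) ∖ S] : S ⊆ V(F), Δ(F[S]) ≤ 1}`. -/
def HFamFree {VF V : Type*} (F : SimpleGraph VF) (G : SimpleGraph V) : Prop :=
  ∀ S : Set VF, (∀ v ∈ S, (F.neighborSet v ∩ S).ncard ≤ 1) →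
    ¬ GContains G (F.induce Sᶜ)

/-- The common neighborhood of `S` outside `S`. -/
def commonNbhd {V : Type*} (G : SimpleGraph V) (S : Set V) : Set V :=
  {v | v ∉ S ∧ ∀ u ∈ S, G.Adj v u}

/-- The quantity `n_k = (n/3 − C(ℓ,2)) / ((⌈ℓ/2⌉+1)·C(ℓ,⌊ℓ/2⌋)) + kℓ`. -/
noncomputable def nkQ (n k ℓ : ℕ) : ℚ :=
  ((n : ℚ) / 3 - (ℓ.choose 2 : ℚ)) /
    ((((ℓ + 1) / 2 + 1 : ℕ) : ℚ) * (ℓ.choose (ℓ / 2) : ℚ)) + (k : ℚ) * (ℓ : ℚ)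

/-- The set of vertices belonging to some `⌊ℓ/2⌋`-set whose common neighborhood outside it
has size at least `n_k`. -/
def bigA (n k ℓ : ℕ) (G : SimpleGraph (Fin n)) : Set (Fin n) :=
  {v | ∃ S : Finset (Fin n), v ∈ S ∧ S.card = ℓ / 2 ∧
    nkQ n k ℓ ≤ ((commonNbhd G ↑S).ncard : ℚ)}

/-!
Write `h = ⌊ℓ/2⌋`. Suppose `G` has no `j ≥ 2` disjoint copies of `P_ℓ` but about `j h n` edges,
and `|Y| < h`. Take a maximal family of disjoint `P_ℓ`'s in `G - Y`, with vertex set `U`. By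
Erdős–Gallai, `G - U` has at most `(ℓ - 2) n / 2` edges, plus up to `(h - 1) n` edges at `Y` when
the family has fewer than `j - 1` paths. So many edges leave `U`, and since an outside vertex
with fewer than `h` neighbours on a path sends at most `h - 1` edges to it, for some path `P` of
the family about `n / (2 (⌈ℓ/2⌉ + 1))` outside vertices have `h` neighbours on `P`. Pigeonholing
over the `C(ℓ, h)` sets of `h` vertices of `P` gives an `h`-set `S ⊆ P`, disjoint from `Y`, with at
least `n_k` common neighbours.

Deleting `S` loses at most `h n` edges, and `G - S` has no `j - 1` disjoint `P_ℓ`'s, since a path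
zigzagging between `S` and its common neighbourhood would extend them to `j`. Recursing from
`j = k` yields the `k - 1` sets; each later set has a common neighbour in `G - S`, so it misses
`S`.
-/

open Finset

namespace SimpleGraph

section Isolate

variable {V : Type*}

/-- `G - A`, kept on the vertex type of `G`: the vertices of `A` become isolated. -/
def isolate (G : SimpleGraph V) (A : Finset V) : SimpleGraph V where
  Adj x y := G.Adj x y ∧ x ∉ A ∧ y ∉ A
  symm := ⟨fun _ _ h => ⟨h.1.symm, h.2.2, h.2.1⟩⟩
  loopless := ⟨fun _ h => G.loopless.irrefl _ h.1⟩

variable {G : SimpleGraph V} {A B : Finset V}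

instance [DecidableEq V] [DecidableRel G.Adj] : DecidableRel (G.isolate A).Adj :=
  fun x y => inferInstanceAs (Decidable (G.Adj x y ∧ x ∉ A ∧ y ∉ A))

@[simp]
theorem isolate_adj {x y : V} : (G.isolate A).Adj x y ↔ G.Adj x y ∧ x ∉ A ∧ y ∉ A := Iff.rfl

theorem isolate_le : G.isolate A ≤ G := fun _ _ h => h.1

theorem isolate_isolate [DecidableEq V] : (G.isolate A).isolate B = G.isolate (A ∪ B) := by
  ext x y
  simp only [isolate_adj, mem_union]
  tauto

variable [Fintype V] [DecidableEq V] [DecidableRel G.Adj]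

theorem neighborFinset_isolate {v : V} (hv : v ∉ A) :
    (G.isolate A).neighborFinset v = G.neighborFinset v \ A := by
  ext u
  simp [hv]

theorem degree_isolate_of_mem {v : V} (hv : v ∈ A) : (G.isolate A).degree v = 0 := by
  rw [← card_neighborFinset_eq_degree, card_eq_zero, eq_empty_iff_forall_notMem]
  simp [hv]

theorem sum_card_neighborFinset_inter_comm (s t : Finset V) :
    ∑ v ∈ s, #(G.neighborFinset v ∩ t) = ∑ u ∈ t, #(G.neighborFinset u ∩ s) := by
  convert sum_card_bipartiteAbove_eq_sum_card_bipartiteBelow G.Adj (s := s) (t := t) using 3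
  · ext; simp [bipartiteAbove, and_comm]
  · ext; simp [bipartiteBelow, adj_comm, and_comm]

theorem sum_degree_eq_sum_degree_isolate (A : Finset V) :
    ∑ v, G.degree v = ∑ v ∈ A, G.degree v + ∑ v ∈ Aᶜ, #(G.neighborFinset v ∩ A) +
      ∑ v, (G.isolate A).degree v := by
  have hout : ∀ v ∈ Aᶜ, G.degree v = #(G.neighborFinset v ∩ A) + (G.isolate A).degree v := by
    intro v hv
    rw [← card_neighborFinset_eq_degree, ← card_neighborFinset_eq_degree,
      neighborFinset_isolate (mem_compl.mp hv), card_inter_add_card_sdiff]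
  rw [← sum_add_sum_compl A, ← sum_add_sum_compl A (fun v => (G.isolate A).degree v),
    sum_congr rfl hout, sum_add_distrib,
    sum_eq_zero fun v hv => degree_isolate_of_mem hv]
  ring

theorem sum_degree_le_sum_degree_isolate_add (A : Finset V) :
    ∑ v, G.degree v ≤ ∑ v, (G.isolate A).degree v + 2 * ∑ v ∈ A, G.degree v := by
  have hcross : ∑ v ∈ Aᶜ, #(G.neighborFinset v ∩ A) ≤ ∑ v ∈ A, G.degree v := by
    rw [sum_card_neighborFinset_inter_comm]
    exact sum_le_sum fun v _ => card_le_card inter_subset_left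
  rw [sum_degree_eq_sum_degree_isolate A]
  omega

theorem sum_degree_le_sum_degree_isolate_add_mul (A : Finset V) :
    ∑ v, G.degree v ≤ ∑ v, (G.isolate A).degree v + 2 * #A * Fintype.card V := by
  have := sum_le_card_nsmul A (fun v => G.degree v) _ fun v _ => (G.degree_lt_card_verts v).le
  have := sum_degree_le_sum_degree_isolate_add (G := G) A
  rw [smul_eq_mul] at *
  linarith

theorem sum_degree_le_card_mul_card_add (A : Finset V) :
    ∑ v, G.degree v ≤
      #A * #A + 2 * ∑ v ∈ Aᶜ, #(G.neighborFinset v ∩ A) + ∑ v, (G.isolate A).degree v := by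
  have hin : ∑ v ∈ A, G.degree v ≤ #A * #A + ∑ v ∈ Aᶜ, #(G.neighborFinset v ∩ A) := by
    rw [sum_card_neighborFinset_inter_comm, ← smul_eq_mul, ← sum_const, ← sum_add_distrib]
    refine sum_le_sum fun v _ => ?_
    rw [← card_neighborFinset_eq_degree, ← card_inter_add_card_sdiff _ A, sdiff_eq_inter_compl]
    exact Nat.add_le_add_right (card_le_card inter_subset_right) _
  rw [sum_degree_eq_sum_degree_isolate A]
  omega

theorem sum_card_neighborFinset_inter_le (P W : Finset V) (h : ℕ) :
    ∑ v ∈ W, #(G.neighborFinset v ∩ P) ≤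
      (h - 1) * #W + (#P + 1 - h) * #{v ∈ W | h ≤ #(G.neighborFinset v ∩ P)} := by
  rw [card_filter, mul_sum, mul_comm, ← smul_eq_mul, ← sum_const, ← sum_add_distrib]
  refine sum_le_sum fun v _ => ?_
  have := card_le_card (inter_subset_right (s₁ := G.neighborFinset v) (s₂ := P))
  split_ifs <;> omega

end Isolate

section Paths

variable {V : Type*} {G H : SimpleGraph V} {m : ℕ} {p c : ℕ → V}

structure IsPathSeq (G : SimpleGraph V) (m : ℕ) (p : ℕ → V) : Prop where
  injOn : Set.InjOn p (Set.Iio m)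
  adj : ∀ i, i + 1 < m → G.Adj (p i) (p (i + 1))

/-- A cycle of `G` when `3 ≤ m`; for `m = 2` it is an edge traversed back and forth. -/
structure IsCycleSeq (G : SimpleGraph V) (m : ℕ) (c : ℕ → V) : Prop where
  injOn : Set.InjOn c (Set.Iio m)
  adj : ∀ i < m, G.Adj (c i) (c ((i + 1) % m))

def PathFree (G : SimpleGraph V) (m : ℕ) : Prop := ∀ p, ¬ G.IsPathSeq m p

theorem IsPathSeq.mono (hGH : G ≤ H) (hp : G.IsPathSeq m p) : H.IsPathSeq m p :=
  ⟨hp.injOn, fun i hi => hGH (hp.adj i hi)⟩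

theorem PathFree.anti (hGH : G ≤ H) (hH : H.PathFree m) : G.PathFree m :=
  fun p hp => hH p (hp.mono hGH)

theorem IsPathSeq.of_le (hp : G.IsPathSeq m p) {m' : ℕ} (h : m' ≤ m) : G.IsPathSeq m' p :=
  ⟨hp.injOn.mono fun i (hi : i < m') => show i < m by omega, fun i hi => hp.adj i (by omega)⟩

theorem IsPathSeq.le_card [Fintype V] (hp : G.IsPathSeq m p) : m ≤ Fintype.card V := by
  simpa using card_le_card_of_injOn p (s := range m) (t := univ) (by simp)
    (by simpa using hp.injOn)

theorem IsPathSeq.notMem_of_isolate [DecidableEq V] {A : Finset V}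
    (hp : (G.isolate A).IsPathSeq m p) (hm : 2 ≤ m) {i : ℕ} (hi : i < m) : p i ∉ A := by
  rcases Nat.lt_or_ge (i + 1) m with h | h
  · exact (hp.adj i h).2.1
  · obtain ⟨j, rfl⟩ : ∃ j, i = j + 1 := ⟨i - 1, by omega⟩
    exact (hp.adj j (by omega)).2.2

theorem isPathSeq_one (x : V) : G.IsPathSeq 1 fun _ => x :=
  ⟨fun i (hi : i < 1) j (hj : j < 1) _ => by omega, fun i hi => by omega⟩

theorem IsPathSeq.cons (hp : G.IsPathSeq m p) {y : V} (hy : ∀ i < m, p i ≠ y)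
    (hadj : G.Adj y (p 0)) : G.IsPathSeq (m + 1) fun i => if i = 0 then y else p (i - 1) := by
  constructor
  · intro i (hi : i < m + 1) j (hj : j < m + 1) hij
    rcases i with _ | i <;> rcases j with _ | j <;> simp only [↓reduceIte, add_tsub_cancel_right,
      Nat.add_one_ne_zero] at hij
    · rfl
    · exact absurd hij.symm (hy j (by omega))
    · exact absurd hij (hy i (by omega))
    · exact congrArg (· + 1) (hp.injOn (show i < m by omega) (show j < m by omega) hij)
  · rintro (_ | i) hi
    · simpa using hadj
    · simpa using hp.adj i (by omega)

theorem IsPathSeq.reverse (hp : G.IsPathSeq m p) : G.IsPathSeq m fun i => p (m - 1 - i) := by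
  constructor
  · intro i (hi : i < m) j (hj : j < m) hij
    have := hp.injOn (show m - 1 - i < m by omega) (show m - 1 - j < m by omega) hij
    omega
  · intro i hi
    rw [show m - 1 - i = m - 2 - i + 1 by omega, show m - 1 - (i + 1) = m - 2 - i by omega]
    exact (hp.adj _ (by omega)).symm

theorem IsCycleSeq.isPathSeq_rotate (hc : G.IsCycleSeq m c) (a : ℕ) :
    G.IsPathSeq m fun i => c ((a + i) % m) := by
  constructor
  · intro i (hi : i < m) j (hj : j < m) hij
    have hm : (a + i) % m = (a + j) % m :=
      hc.injOn (show _ < m from Nat.mod_lt _ (by omega))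
        (show _ < m from Nat.mod_lt _ (by omega)) hij
    have : i % m = j % m := Nat.ModEq.add_left_cancel' a hm
    rwa [Nat.mod_eq_of_lt hi, Nat.mod_eq_of_lt hj] at this
  · intro i hi
    simpa [Nat.mod_add_mod, add_assoc] using hc.adj _ (Nat.mod_lt (a + i) (by omega))

theorem exists_isPathSeq_pathFree_succ [Fintype V] {x y : V} (hxy : G.Adj x y) :
    ∃ m p, 2 ≤ m ∧ G.IsPathSeq m p ∧ G.PathFree (m + 1) := by
  classical
  have h2 : ∃ p, G.IsPathSeq 2 p :=
    ⟨_, (isPathSeq_one y).cons (fun i hi => hxy.ne.symm) hxy⟩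
  have h2n : 2 ≤ Fintype.card V := h2.elim fun _ hp => hp.le_card
  obtain ⟨p, hp⟩ := Nat.findGreatest_spec (P := fun m => ∃ p, G.IsPathSeq m p) h2n h2
  refine ⟨_, p, Nat.le_findGreatest h2n h2, hp, fun q hq => ?_⟩
  exact Nat.findGreatest_is_greatest (Nat.lt_succ_self _) hq.le_card ⟨q, hq⟩

theorem IsPathSeq.exists_eq_of_adj_first (hp : G.IsPathSeq m p) (hmax : G.PathFree (m + 1))
    {w : V} (hw : G.Adj (p 0) w) : ∃ i < m, p i = w := by
  by_contra! h
  exact hmax _ (hp.cons h hw.symm)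

theorem IsPathSeq.exists_eq_of_adj_last (hp : G.IsPathSeq m p) (hmax : G.PathFree (m + 1))
    {w : V} (hw : G.Adj (p (m - 1)) w) : ∃ i < m, p i = w := by
  obtain ⟨i, hi, rfl⟩ := hp.reverse.exists_eq_of_adj_first hmax (by simpa using hw)
  exact ⟨m - 1 - i, by omega, rfl⟩

theorem IsCycleSeq.exists_eq_of_adj (hc : G.IsCycleSeq m c) (hmax : G.PathFree (m + 1))
    {a : ℕ} (ha : a < m) {w : V} (hw : G.Adj (c a) w) : ∃ i < m, c i = w := by
  by_contra! h
  refine hmax _ ((hc.isPathSeq_rotate a).cons (fun i _ => h _ (Nat.mod_lt _ (by omega))) ?_)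
  simpa [Nat.mod_eq_of_lt ha] using hw.symm

/-- The cycle `p 0, …, p i, p (m - 1), p (m - 2), …, p (i + 1)`. -/
theorem IsPathSeq.isCycleSeq_of_crossing (hp : G.IsPathSeq m p) {i : ℕ} (hi : i + 1 < m)
    (h0 : G.Adj (p 0) (p (i + 1))) (h1 : G.Adj (p (m - 1)) (p i)) :
    G.IsCycleSeq m fun t => p (if t ≤ i then t else m + i - t) := by
  constructor
  · intro s (hs : s < m) t (ht : t < m) hst
    have := hp.injOn (show (if s ≤ i then s else m + i - s) < m by split_ifs <;> omega)
      (show (if t ≤ i then t else m + i - t) < m by split_ifs <;> omega) hst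
    split_ifs at this <;> omega
  · intro t ht
    rcases Nat.lt_or_ge (t + 1) m with hlt | hge
    · rw [Nat.mod_eq_of_lt hlt]
      by_cases hti : t + 1 ≤ i
      · rw [if_pos (by omega), if_pos hti]
        exact hp.adj t (by omega)
      by_cases hti' : t = i
      · subst hti'
        rw [if_pos le_rfl, if_neg (by omega), show m + t - (t + 1) = m - 1 by omega]
        exact h1.symm
      · rw [if_neg (by omega), if_neg hti, show m + i - t = m + i - (t + 1) + 1 by omega]
        exact (hp.adj _ (by omega)).symm
    · obtain rfl : t = m - 1 := by omega
      rw [show m - 1 + 1 = m by omega, Nat.mod_self, if_pos (Nat.zero_le _), if_neg (by omega),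
        show m + i - (m - 1) = i + 1 by omega]
      exact h0.symm

theorem IsPathSeq.exists_eq_of_adj_of_crossing (hp : G.IsPathSeq m p)
    (hmax : G.PathFree (m + 1)) {i : ℕ} (hi : i + 1 < m) (h0 : G.Adj (p 0) (p (i + 1)))
    (h1 : G.Adj (p (m - 1)) (p i)) {j : ℕ} (hj : j < m) {w : V} (hw : G.Adj (p j) w) :
    ∃ j' < m, p j' = w := by
  set σ : ℕ → ℕ := fun t => if t ≤ i then t else m + i - t
  have hσ : ∀ t < m, σ t < m ∧ σ (σ t) = t := by
    intro t ht
    simp only [σ]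
    split_ifs <;> omega
  have hc : G.IsCycleSeq m (p ∘ σ) := hp.isCycleSeq_of_crossing hi h0 h1
  obtain ⟨t, ht, hwt⟩ := hc.exists_eq_of_adj hmax (hσ j hj).1 (w := w)
    (show G.Adj (p (σ (σ j))) w by rwa [(hσ j hj).2])
  exact ⟨σ t, (hσ t ht).1, hwt⟩

end Paths

section ErdosGallai

variable {V : Type*} [Fintype V] [DecidableEq V] {G : SimpleGraph V} [DecidableRel G.Adj]
  {ℓ : ℕ}

theorem IsPathSeq.degree_first_le (hp : G.IsPathSeq m p) (hmax : G.PathFree (m + 1)) :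
    G.degree (p 0) ≤ #{i ∈ range (m - 1) | G.Adj (p 0) (p (i + 1))} := by
  rw [← card_neighborFinset_eq_degree]
  refine (card_le_card fun w hw => ?_).trans (card_image_le (f := fun i => p (i + 1)))
  rw [mem_neighborFinset] at hw
  obtain ⟨j, hj, rfl⟩ := hp.exists_eq_of_adj_first hmax hw
  obtain ⟨i, rfl⟩ : ∃ i, j = i + 1 := by
    rcases j with _ | i
    · exact absurd hw (G.loopless.irrefl _)
    · exact ⟨i, rfl⟩
  exact mem_image_of_mem _ (mem_filter.mpr ⟨mem_range.mpr (by omega), hw⟩)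

theorem IsPathSeq.degree_last_le (hp : G.IsPathSeq m p) (hmax : G.PathFree (m + 1)) :
    G.degree (p (m - 1)) ≤ #{i ∈ range (m - 1) | G.Adj (p (m - 1)) (p i)} := by
  rw [← card_neighborFinset_eq_degree]
  refine (card_le_card fun w hw => ?_).trans (card_image_le (f := p))
  rw [mem_neighborFinset] at hw
  obtain ⟨j, hj, rfl⟩ := hp.exists_eq_of_adj_last hmax hw
  have hjm : j ≠ m - 1 := by
    rintro rfl
    exact G.loopless.irrefl _ hw
  exact mem_image_of_mem _ (mem_filter.mpr ⟨mem_range.mpr (by omega), hw⟩)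

/-- `W` is the vertex set of a longest path: its ends see a crossing pair of consecutive
vertices, so `W` spans a cycle, and maximality closes `W` under adjacency. -/
theorem PathFree.exists_closed (hG : G.PathFree ℓ) {x y : V} (hxy : G.Adj x y)
    (hdeg : ∀ v w, G.Adj v w → ℓ - 2 < 2 * G.degree v) :
    ∃ W : Finset V, W.Nonempty ∧ #W < ℓ ∧ (∀ v ∈ W, ∃ w, G.Adj v w) ∧
      ∀ v ∈ W, ∀ w, G.Adj v w → w ∈ W := by
  obtain ⟨m, p, hm, hp, hmax⟩ := exists_isPathSeq_pathFree_succ hxy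
  have hmℓ : m < ℓ := by
    by_contra! h
    exact hG p (hp.of_le h)
  have hadj0 : G.Adj (p 0) (p 1) := hp.adj 0 (by omega)
  have hadj1 : G.Adj (p (m - 1)) (p (m - 2)) := by
    simpa [show m - 2 + 1 = m - 1 by omega] using (hp.adj (m - 2) (by omega)).symm
  set A := {i ∈ range (m - 1) | G.Adj (p 0) (p (i + 1))}
  set B := {i ∈ range (m - 1) | G.Adj (p (m - 1)) (p i)}
  obtain ⟨i, hi⟩ : (A ∩ B).Nonempty := by
    rw [← card_pos]
    have hAB : #(A ∪ B) ≤ m - 1 :=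
      (card_le_card (union_subset (filter_subset _ _) (filter_subset _ _))).trans_eq
        (card_range _)
    have := card_union_add_card_inter A B
    have hA : G.degree (p 0) ≤ #A := hp.degree_first_le hmax
    have hB : G.degree (p (m - 1)) ≤ #B := hp.degree_last_le hmax
    have := hdeg _ _ hadj0
    have := hdeg _ _ hadj1
    omega
  simp only [A, B, mem_inter, mem_filter, mem_range] at hi
  refine ⟨(range m).image p, ⟨p 0, mem_image_of_mem _ (mem_range.mpr (by omega))⟩,
    card_image_le.trans_lt (by simpa), ?_, ?_⟩
  · simp only [mem_image, mem_range, forall_exists_index, and_imp, forall_apply_eq_imp_iff₂]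
    intro j hj
    rcases Nat.lt_or_ge (j + 1) m with h | h
    · exact ⟨_, hp.adj j h⟩
    · obtain rfl : j = m - 1 := by omega
      exact ⟨_, hadj1⟩
  · simp only [mem_image, mem_range, forall_exists_index, and_imp, forall_apply_eq_imp_iff₂]
    intro j hj w hw
    exact hp.exists_eq_of_adj_of_crossing hmax (by omega) hi.1.2 hi.2.2 hj hw

theorem PathFree.exists_sum_degree_le_isolate (hG : G.PathFree ℓ) {S : Finset V}
    (hS : ∀ v w, G.Adj v w → v ∈ S) (hne : S.Nonempty) :
    ∃ W ⊆ S, W.Nonempty ∧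
      ∑ v, G.degree v ≤ ∑ v, (G.isolate W).degree v + (ℓ - 2) * #W := by
  by_cases hlow : ∃ v ∈ S, 2 * G.degree v ≤ ℓ - 2
  · obtain ⟨v, hv, hdeg⟩ := hlow
    refine ⟨{v}, singleton_subset_iff.mpr hv, singleton_nonempty v, ?_⟩
    have := sum_degree_le_sum_degree_isolate_add (G := G) {v}
    rw [sum_singleton] at this
    rw [card_singleton, mul_one]
    omega
  push Not at hlow
  obtain ⟨x, hx⟩ := hne
  obtain ⟨y, hxy⟩ : ∃ y, G.Adj x y := by
    have := hlow x hx
    obtain ⟨y, hy⟩ := card_pos.mp (show 0 < #(G.neighborFinset x) by simp; omega)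
    exact ⟨y, (mem_neighborFinset _ _ _).mp hy⟩
  obtain ⟨W, hWne, hWℓ, hWadj, hWclosed⟩ :=
    hG.exists_closed hxy fun v w hvw => hlow v (hS v w hvw)
  refine ⟨W, fun v hv => (hWadj v hv).elim (hS v), hWne, ?_⟩
  have hcross : ∑ v ∈ Wᶜ, #(G.neighborFinset v ∩ W) = 0 := by
    refine sum_eq_zero fun v hv => card_eq_zero.mpr (eq_empty_iff_forall_notMem.mpr ?_)
    intro u hu
    simp only [mem_inter, mem_neighborFinset] at hu
    exact mem_compl.mp hv (hWclosed u hu.2 v hu.1.symm)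
  have hdegW : ∑ v ∈ W, G.degree v ≤ (ℓ - 2) * #W := by
    rw [mul_comm, ← smul_eq_mul]
    refine sum_le_card_nsmul _ _ _ fun v hv => ?_
    rw [← card_neighborFinset_eq_degree]
    have : G.neighborFinset v ⊆ W.erase v := fun w hw =>
      mem_erase.mpr ⟨((mem_neighborFinset _ _ _).mp hw).ne.symm,
        hWclosed v hv w ((mem_neighborFinset _ _ _).mp hw)⟩
    have := card_le_card this
    rw [card_erase_of_mem hv] at this
    omega
  rw [sum_degree_eq_sum_degree_isolate W, hcross]
  omega

theorem PathFree.sum_degree_le_of_forall_adj_mem (hG : G.PathFree ℓ) (S : Finset V)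
    (hS : ∀ v w, G.Adj v w → v ∈ S) : ∑ v, G.degree v ≤ (ℓ - 2) * #S := by
  induction S using Finset.strongInduction generalizing G with
  | H S ih =>
  rcases S.eq_empty_or_nonempty with rfl | hne
  · refine (sum_eq_zero fun v _ => ?_).le
    rw [← card_neighborFinset_eq_degree, card_eq_zero, eq_empty_iff_forall_notMem]
    exact fun w hw => absurd (hS v w ((mem_neighborFinset _ _ _).mp hw)) (notMem_empty v)
  obtain ⟨W, hWS, hWne, hW⟩ := hG.exists_sum_degree_le_isolate hS hne
  have hlt : S \ W ⊂ S := sdiff_ssubset hWS hWne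
  have := ih _ hlt (hG.anti isolate_le) fun v w hvw => mem_sdiff.mpr ⟨hS v w hvw.1, hvw.2.1⟩
  have hcard : #(S \ W) + #W = #S := card_sdiff_add_card_eq_card hWS
  calc ∑ v, G.degree v ≤ (ℓ - 2) * #(S \ W) + (ℓ - 2) * #W := by omega
    _ = (ℓ - 2) * #S := by rw [← mul_add, hcard]

/-- The Erdős–Gallai theorem for paths. -/
theorem PathFree.sum_degree_le (hG : G.PathFree ℓ) :
    ∑ v, G.degree v ≤ (ℓ - 2) * Fintype.card V := by
  simpa using hG.sum_degree_le_of_forall_adj_mem univ fun v _ _ => mem_univ v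

end ErdosGallai

section Families

variable {V : Type*} [DecidableEq V] {G H : SimpleGraph V} {t ℓ : ℕ} {F : ℕ → ℕ → V}

structure IsPathFamily (G : SimpleGraph V) (t ℓ : ℕ) (F : ℕ → ℕ → V) : Prop where
  isPathSeq : ∀ a < t, G.IsPathSeq ℓ (F a)
  pairwiseDisjoint : (range t : Set ℕ).PairwiseDisjoint fun a => (range ℓ).image (F a)

def familyVerts (t ℓ : ℕ) (F : ℕ → ℕ → V) : Finset V :=
  (range t).biUnion fun a => (range ℓ).image (F a)

theorem mem_familyVerts {v : V} : v ∈ familyVerts t ℓ F ↔ ∃ a < t, ∃ s < ℓ, F a s = v := by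
  simp [familyVerts]

theorem card_familyVerts_le : #(familyVerts t ℓ F) ≤ t * ℓ :=
  card_biUnion_le.trans <| (sum_le_card_nsmul _ _ ℓ fun _ _ =>
    card_image_le.trans (card_range ℓ).le).trans_eq (by simp)

theorem IsPathFamily.mono (hGH : G ≤ H) (hF : G.IsPathFamily t ℓ F) : H.IsPathFamily t ℓ F :=
  ⟨fun a ha => (hF.isPathSeq a ha).mono hGH, hF.pairwiseDisjoint⟩

theorem IsPathFamily.eq_of_eq (hF : G.IsPathFamily t ℓ F) {a b s u : ℕ} (ha : a < t) (hb : b < t)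
    (hs : s < ℓ) (hu : u < ℓ) (h : F a s = F b u) : a = b := by
  by_contra hab
  refine Finset.disjoint_left.mp (hF.pairwiseDisjoint (by simpa using ha) (by simpa using hb) hab)
    (mem_image_of_mem _ (mem_range.mpr hs)) ?_
  rw [h]
  exact mem_image_of_mem _ (mem_range.mpr hu)

theorem IsPathFamily.update (hF : G.IsPathFamily t ℓ F) {p : ℕ → V} (hp : G.IsPathSeq ℓ p)
    (hpF : ∀ s < ℓ, p s ∉ familyVerts t ℓ F) :
    G.IsPathFamily (t + 1) ℓ (Function.update F t p) := by
  constructor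
  · intro a ha
    rcases eq_or_ne a t with rfl | hat
    · simpa using hp
    · simpa [hat] using hF.isPathSeq a (by omega)
  · have hsub : ∀ a < t, (range ℓ).image (F a) ⊆ familyVerts t ℓ F := fun a ha =>
      subset_biUnion_of_mem (fun a => (range ℓ).image (F a)) (mem_range.mpr ha)
    have hdisj : ∀ a < t, Disjoint ((range ℓ).image p) ((range ℓ).image (F a)) := fun a ha =>
      disjoint_of_subset_right (hsub a ha) (Finset.disjoint_left.mpr (by simpa using hpF))
    intro a ha b hb hab
    simp only [coe_range, Set.mem_Iio] at ha hb
    rcases eq_or_ne a t with rfl | hat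
    · simpa [Function.onFun, hab.symm] using hdisj b (by omega)
    rcases eq_or_ne b t with rfl | hbt
    · simpa [Function.onFun, hat] using (hdisj a (by omega)).symm
    · simpa [Function.onFun, hat, hbt] using
        hF.pairwiseDisjoint (by simpa using (show a < t by omega))
          (by simpa using (show b < t by omega)) hab

theorem exists_isPathFamily_pathFree_isolate [Fintype V] [Nonempty V] {j : ℕ} (hℓ : 2 ≤ ℓ)
    (hfree : ¬ ∃ F, G.IsPathFamily j ℓ F) :
    ∃ t < j, ∃ F, G.IsPathFamily t ℓ F ∧ (G.isolate (familyVerts t ℓ F)).PathFree ℓ := by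
  classical
  set P : ℕ → Prop := fun t => ∃ F, G.IsPathFamily t ℓ F
  have h0 : P 0 := ⟨fun _ _ => Classical.arbitrary V, fun a ha => by simp at ha, by simp⟩
  obtain ⟨F, hF⟩ := Nat.findGreatest_spec (P := P) (Nat.zero_le j) h0
  have hlt : Nat.findGreatest P j < j :=
    (Nat.findGreatest_le j).lt_of_ne fun h => hfree (h ▸ ⟨F, hF⟩)
  refine ⟨_, hlt, F, hF, fun p hp => ?_⟩
  refine Nat.findGreatest_is_greatest (Nat.lt_succ_self _) hlt ⟨_, hF.update (hp.mono isolate_le)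
    fun s hs => hp.notMem_of_isolate hℓ hs⟩

theorem IsPathFamily.exists_sum_card_neighborFinset_inter_le [Fintype V] [DecidableRel G.Adj]
    (hF : G.IsPathFamily t ℓ F) (ht : 0 < t) (h : ℕ) :
    ∃ a < t, ∑ v ∈ (familyVerts t ℓ F)ᶜ, #(G.neighborFinset v ∩ familyVerts t ℓ F) ≤
      t * ((h - 1) * Fintype.card V + (ℓ + 1 - h) *
        #{v ∈ (familyVerts t ℓ F)ᶜ | h ≤ #(G.neighborFinset v ∩ (range ℓ).image (F a))}) := by
  set U := familyVerts t ℓ F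
  set R := fun a => #{v ∈ Uᶜ | h ≤ #(G.neighborFinset v ∩ (range ℓ).image (F a))}
  have hsplit : ∀ v, #(G.neighborFinset v ∩ U) =
      ∑ a ∈ range t, #(G.neighborFinset v ∩ (range ℓ).image (F a)) := fun v => by
    rw [show U = familyVerts t ℓ F from rfl, familyVerts, inter_biUnion,
      card_biUnion (hF.pairwiseDisjoint.mono
      fun a => inter_subset_right)]
  obtain ⟨a, ha, hmax⟩ := exists_max_image (range t) R (nonempty_range_iff.mpr ht.ne')
  refine ⟨a, mem_range.mp ha, ?_⟩
  rw [sum_congr rfl fun v _ => hsplit v, sum_comm]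
  calc _ ≤ ∑ b ∈ range t, ((h - 1) * Fintype.card V + (ℓ + 1 - h) * R a) := by
        refine sum_le_sum fun b hb => (sum_card_neighborFinset_inter_le _ _ h).trans ?_
        have : #((range ℓ).image (F b)) ≤ ℓ := card_image_le.trans (card_range ℓ).le
        exact add_le_add (Nat.mul_le_mul_left _ (card_le_univ _))
          (Nat.mul_le_mul (by omega) (hmax b hb))
    _ = _ := by rw [sum_const, card_range, smul_eq_mul]

/-- When `t = j - 1`, `G - U` is already `P_ℓ`-free, since a path in it would be a `j`-th one;
otherwise the edges at `Y` are paid for by the missing paths. -/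
theorem IsPathFamily.sum_degree_isolate_le [Fintype V] [DecidableRel G.Adj] {j k : ℕ}
    {Y : Finset V} (hℓ : 2 ≤ ℓ) (hfree : ¬ ∃ F, G.IsPathFamily j ℓ F)
    (hF : (G.isolate Y).IsPathFamily t ℓ F) (ht : t < j) (hY : #Y ≤ k)
    (hmax : (G.isolate (Y ∪ familyVerts t ℓ F)).PathFree ℓ) :
    ∑ v, (G.isolate (familyVerts t ℓ F)).degree v + 2 * t * k * Fintype.card V ≤
      (ℓ - 2) * Fintype.card V + 2 * (j - 1) * k * Fintype.card V := by
  set U := familyVerts t ℓ F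
  rcases Nat.lt_or_ge (t + 1) j with hlt | hge
  · have hY' := sum_degree_le_sum_degree_isolate_add_mul (G := G.isolate U) Y
    rw [union_comm, ← isolate_isolate] at hmax
    have hpf := hmax.sum_degree_le
    have : 2 * #Y * Fintype.card V + 2 * t * k * Fintype.card V ≤
        2 * (j - 1) * k * Fintype.card V := by
      rw [← add_mul]
      exact Nat.mul_le_mul_right _
        (by nlinarith [Nat.mul_le_mul_right k (show t + 1 ≤ j - 1 by omega)])
    omega
  · obtain rfl : j = t + 1 := by omega
    have hpf : (G.isolate U).PathFree ℓ := fun p hp =>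
      hfree ⟨_, (hF.mono isolate_le).update (hp.mono isolate_le)
        fun s hs => hp.notMem_of_isolate hℓ hs⟩
    simpa using hpf.sum_degree_le

end Families

end SimpleGraph

theorem SimpleGraph.IsPathFamily.gContains_kPaths {V : Type*} [DecidableEq V] {G : SimpleGraph V}
    {t ℓ : ℕ} {F : ℕ → ℕ → V} (hF : G.IsPathFamily t ℓ F) : GContains G (kPaths t ℓ) := by
  refine ⟨⟨fun x => F x.1 x.2, fun x y hxy => ?_⟩, fun x y hxy => ?_⟩
  · have hab := hF.eq_of_eq x.1.isLt y.1.isLt x.2.isLt y.2.isLt hxy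
    have hst : (x.2 : ℕ) = y.2 := (hF.isPathSeq _ x.1.isLt).injOn x.2.isLt y.2.isLt
      (by simpa [hab] using hxy)
    exact Prod.ext (Fin.ext hab) (Fin.ext hst)
  · show G.Adj (F x.1 x.2) (F y.1 y.2)
    obtain ⟨hab, hst | hst⟩ := hxy
    · simpa [hab, ← hst] using (hF.isPathSeq _ y.1.isLt).adj x.2 (by omega)
    · simpa [hab, ← hst] using ((hF.isPathSeq _ y.1.isLt).adj y.2 (by omega)).symm

theorem exists_injOn_Iio_mem {V : Type*} [Nonempty V] {S : Finset V} {m : ℕ} (hm : m ≤ #S) :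
    ∃ f : ℕ → V, Set.InjOn f (Set.Iio m) ∧ ∀ i < m, f i ∈ S := by
  obtain ⟨e⟩ : Nonempty (Fin m ↪ S) := Function.Embedding.nonempty_of_card_le (by simpa)
  refine ⟨fun i => if hi : i < m then e ⟨i, hi⟩ else Classical.arbitrary V, ?_, ?_⟩
  · intro i (hi : i < m) j (hj : j < m) hij
    simpa [hi, hj, Subtype.ext_iff.symm] using hij
  · intro i hi
    simp [hi]

section CommonNeighbourhood

variable {V : Type*} {G : SimpleGraph V}

theorem commonNbhd_mono {H : SimpleGraph V} (hGH : G ≤ H) (S : Set V) :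
    commonNbhd G S ⊆ commonNbhd H S :=
  fun _ hv => ⟨hv.1, fun u hu => hGH (hv.2 u hu)⟩

/-- The zigzag `c₀ s₀ c₁ s₁ …` with `cᵢ ∈ C` and `sᵢ ∈ S`. -/
theorem exists_isPathSeq_of_forall_adj [Nonempty V] {ℓ : ℕ} {S C : Finset V} (hS : ℓ / 2 ≤ #S)
    (hC : ℓ - ℓ / 2 ≤ #C) (hadj : ∀ x ∈ C, ∀ y ∈ S, G.Adj x y) :
    ∃ p, G.IsPathSeq ℓ p ∧ ∀ i < ℓ, p i ∈ S ∨ p i ∈ C := by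
  obtain ⟨c, hcinj, hcC⟩ := exists_injOn_Iio_mem hC
  obtain ⟨s, hsinj, hsS⟩ := exists_injOn_Iio_mem hS
  have hcs : ∀ i < ℓ - ℓ / 2, ∀ i' < ℓ / 2, G.Adj (c i) (s i') := fun i hi i' hi' =>
    hadj _ (hcC i hi) _ (hsS i' hi')
  refine ⟨fun i => if i % 2 = 0 then c (i / 2) else s (i / 2), ⟨?_, ?_⟩, ?_⟩
  · intro i (hi : i < ℓ) j (hj : j < ℓ) hij
    dsimp only at hij
    split_ifs at hij with h1 h2 h2
    · have := hcinj (show i / 2 < ℓ - ℓ / 2 by omega) (show j / 2 < ℓ - ℓ / 2 by omega) hij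
      omega
    · exact absurd hij (hcs _ (by omega) _ (by omega)).ne
    · exact absurd hij.symm (hcs _ (by omega) _ (by omega)).ne
    · have := hsinj (show i / 2 < ℓ / 2 by omega) (show j / 2 < ℓ / 2 by omega) hij
      omega
  · intro i hi
    by_cases h : i % 2 = 0
    · simpa [h, show (i + 1) % 2 ≠ 0 by omega, show (i + 1) / 2 = i / 2 by omega] using
        hcs _ (by omega) _ (by omega)
    · simpa [h, show (i + 1) % 2 = 0 by omega, show (i + 1) / 2 = i / 2 + 1 by omega] using
        (hcs _ (by omega) _ (by omega)).symm
  · intro i hi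
    dsimp only
    split_ifs
    · exact Or.inr (hcC _ (by omega))
    · exact Or.inl (hsS _ (by omega))

theorem SimpleGraph.IsPathFamily.exists_succ_of_isolate [Fintype V] [DecidableEq V] [Nonempty V]
    {S : Finset V} {t ℓ : ℕ} {F : ℕ → ℕ → V} (hF : (G.isolate S).IsPathFamily t ℓ F)
    (hℓ : 2 ≤ ℓ) (hS : ℓ / 2 ≤ #S) (hN : t * ℓ + (ℓ - ℓ / 2) ≤ (commonNbhd G S).ncard) :
    ∃ F', G.IsPathFamily (t + 1) ℓ F' := by
  classical
  set U := familyVerts t ℓ F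
  set C : Finset V := {v | v ∈ commonNbhd G S ∧ v ∉ U}
  have hC : ℓ - ℓ / 2 ≤ #C := by
    have : (commonNbhd G S).ncard ≤ #C + #U := by
      rw [← Set.ncard_coe_finset C, ← Set.ncard_coe_finset U]
      refine (Set.ncard_le_ncard (fun v hv => ?_) (Set.toFinite _)).trans (Set.ncard_union_le _ _)
      by_cases hvU : v ∈ U <;> simp [C, hv, hvU]
    have : #U ≤ t * ℓ := card_familyVerts_le
    omega
  obtain ⟨p, hp, hpSC⟩ := exists_isPathSeq_of_forall_adj hS hC fun x hx y hy =>
    (mem_filter.mp hx).2.1.2 y hy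
  refine ⟨_, (hF.mono isolate_le).update hp fun s hs => ?_⟩
  rcases hpSC s hs with hpS | hpC
  · rw [mem_familyVerts]
    rintro ⟨a, ha, u, hu, hau⟩
    exact (hF.isPathSeq a ha).notMem_of_isolate hℓ hu (hau ▸ hpS)
  · exact (mem_filter.mp hpC).2.2

theorem exists_subset_card_eq_le_ncard_commonNbhd [Fintype V] [DecidableEq V]
    [DecidableRel G.Adj] (P R : Finset V) {h T : ℕ} (hh : h ≤ #P)
    (hR : ∀ v ∈ R, v ∉ P ∧ h ≤ #(G.neighborFinset v ∩ P)) (hRT : (#P).choose h * T ≤ #R) :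
    ∃ S ⊆ P, #S = h ∧ T ≤ (commonNbhd G S).ncard := by
  have hφ : ∀ v, ∃ S : Finset V, v ∈ R → S ∈ (G.neighborFinset v ∩ P).powersetCard h := by
    intro v
    by_cases hv : v ∈ R
    · obtain ⟨S, hS⟩ := powersetCard_nonempty.mpr (hR v hv).2
      exact ⟨S, fun _ => hS⟩
    · exact ⟨∅, fun h => absurd h hv⟩
  choose φ hφ using hφ
  obtain ⟨S, hS, hST⟩ := exists_le_card_fiber_of_mul_le_card_of_maps_to
    (fun v hv => powersetCard_mono inter_subset_right (hφ v hv))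
    (powersetCard_nonempty.mpr hh) (by rwa [card_powersetCard])
  rw [mem_powersetCard] at hS
  refine ⟨S, hS.1, hS.2, hST.trans ?_⟩
  rw [← Set.ncard_coe_finset]
  refine Set.ncard_le_ncard (fun v hv => ?_) (Set.toFinite _)
  obtain ⟨hvR, rfl⟩ := mem_filter.mp hv
  have hNP := (mem_powersetCard.mp (hφ v hvR)).1
  exact ⟨fun hvS => (hR v hvR).1 (hS.1 hvS), fun u hu =>
    (mem_neighborFinset _ _ _).mp (mem_inter.mp (hNP hu)).1⟩

end CommonNeighbourhood

/-- The counting behind `exists_disjoint_card_eq_le_ncard_commonNbhd`: `D`, `E` are the degree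
sums of `G` and `G - U`, `u = |U|²`, `M` counts the edges leaving `U`, and `r` is the number of
outside vertices with `h` neighbours on the best path of the family. The bounds leave
`(2 j + 2 h - 2 - ℓ) n ≤ u + c + 2 t (ℓ + 1 - h) r`, and `t ≤ 2 j - 3 ≤ 2 j + 2 h - 2 - ℓ`. -/
theorem card_le_of_sum_degree_bounds {j t h ℓ n c u r D E M : ℕ} (hj : 2 ≤ j) (ht : t < j)
    (hℓ : ℓ ≤ 2 * h + 1) (h2 : 2 ≤ ℓ) (hE : 2 * (j * h) * n ≤ D + 2 * n + c)
    (hD : D ≤ u + 2 * M + E) (hM : M ≤ t * ((h - 1) * n + (ℓ + 1 - h) * r))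
    (hEr : E + 2 * t * (h - 1) * n ≤ (ℓ - 2) * n + 2 * (j - 1) * (h - 1) * n) :
    n ≤ u + c + 2 * (ℓ + 1 - h) * r := by
  obtain ⟨h, rfl⟩ : ∃ h', h = h' + 1 := ⟨h - 1, by omega⟩
  obtain ⟨j, rfl⟩ : ∃ j', j = j' + 2 := ⟨j - 2, by omega⟩
  obtain ⟨ℓ, rfl⟩ : ∃ ℓ', ℓ = ℓ' + 2 := ⟨ℓ - 2, by omega⟩
  generalize ℓ + 2 + 1 - (h + 1) = H at hM ⊢
  simp only [Nat.add_sub_cancel, show j + 2 - 1 = j + 1 by omega] at hM hEr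
  have key : (2 * j + 1) * n ≤ u + c + 2 * t * H * r := by
    nlinarith [Nat.mul_le_mul_right n hℓ]
  have : (2 * j + 1) * n ≤ (2 * j + 1) * (u + c + 2 * H * r) := by
    nlinarith [Nat.mul_le_mul_right (H * r) (show t ≤ 2 * j + 1 by omega)]
  exact Nat.le_of_mul_le_mul_left this (by omega)

theorem exists_disjoint_card_eq_le_ncard_commonNbhd {V : Type*} [Fintype V] [DecidableEq V]
    {G : SimpleGraph V} [DecidableRel G.Adj] {j ℓ T c : ℕ} {Y : Finset V} (hj : 2 ≤ j)
    (hℓ : 2 ≤ ℓ) (hfree : ¬ ∃ F, G.IsPathFamily j ℓ F) (hY : #Y < ℓ / 2)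
    (hE : 2 * (j * (ℓ / 2)) * Fintype.card V ≤ ∑ v, G.degree v + 2 * Fintype.card V + c)
    (hn : 2 * (ℓ - ℓ / 2 + 1) * ℓ.choose (ℓ / 2) * T + (j * ℓ) ^ 2 + c < Fintype.card V) :
    ∃ S, Disjoint S Y ∧ #S = ℓ / 2 ∧ T ≤ (commonNbhd G S).ncard := by
  set n := Fintype.card V
  set h := ℓ / 2
  have : Nonempty V := Fintype.card_pos_iff.mp (by omega)
  obtain ⟨t, htj, F, hF, hmax⟩ := exists_isPathFamily_pathFree_isolate (G := G.isolate Y) hℓ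
    fun ⟨F, hF⟩ => hfree ⟨F, hF.mono isolate_le⟩
  rw [isolate_isolate] at hmax
  set U := familyVerts t ℓ F
  have hrest := hF.sum_degree_isolate_le hℓ hfree htj (k := h - 1) (by omega) hmax
  have hDS := sum_degree_le_card_mul_card_add (G := G) U
  have hU : #U * #U ≤ (j * ℓ) ^ 2 := by
    have : #U ≤ j * ℓ := card_familyVerts_le.trans (Nat.mul_le_mul_right _ htj.le)
    rw [sq]
    exact Nat.mul_le_mul this this
  rcases Nat.eq_zero_or_pos t with rfl | ht
  · have hcross : ∑ v ∈ Uᶜ, #(G.neighborFinset v ∩ U) ≤ 0 * ((h - 1) * n + (ℓ + 1 - h) * 0) := by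
      simp [U, familyVerts]
    have := card_le_of_sum_degree_bounds hj htj (by omega) hℓ hE hDS hcross hrest
    omega
  obtain ⟨a, ha, hcross⟩ := (hF.mono isolate_le).exists_sum_card_neighborFinset_inter_le ht h
  have hpath := hF.isPathSeq a ha
  set P := (range ℓ).image (F a)
  set R := {v ∈ Uᶜ | h ≤ #(G.neighborFinset v ∩ P)}
  have hnR := card_le_of_sum_degree_bounds hj htj (by omega) hℓ hE hDS hcross hrest
  have hP : #P = ℓ := by
    rw [card_image_of_injOn (by simpa using hpath.injOn), card_range]
  have hRT : ℓ.choose h * T ≤ #R := by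
    have : 2 * (ℓ - h + 1) * (ℓ.choose h * T) < 2 * (ℓ - h + 1) * #R := by
      rw [show ℓ + 1 - h = ℓ - h + 1 by omega] at hnR
      rw [← mul_assoc]
      omega
    exact (Nat.lt_of_mul_lt_mul_left this).le
  have hPU : P ⊆ U := subset_biUnion_of_mem (fun a => (range ℓ).image (F a)) (mem_range.mpr ha)
  obtain ⟨S, hSP, hS, hST⟩ := exists_subset_card_eq_le_ncard_commonNbhd P R (by omega)
    (fun v hv => ⟨fun hvP => (mem_filter.mp hv).1 |> mem_compl.mp <| hPU hvP,
      (mem_filter.mp hv).2⟩) (by rwa [hP])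
  refine ⟨S, Finset.disjoint_left.mpr fun v hvS hvY => ?_, hS, hST⟩
  obtain ⟨s, hs, rfl⟩ := mem_image.mp (hSP hvS)
  exact hpath.notMem_of_isolate hℓ (mem_range.mp hs) hvY

open Function in
theorem exists_pairwise_disjoint_le_ncard_commonNbhd {V : Type*} [Fintype V] [DecidableEq V]
    {ℓ T c : ℕ} {Y : Finset V} (hℓ : 2 ≤ ℓ) (hY : #Y < ℓ / 2) (m : ℕ) (hT : (m + 1) * ℓ ≤ T)
    (hn : 2 * (ℓ - ℓ / 2 + 1) * ℓ.choose (ℓ / 2) * T + ((m + 1) * ℓ) ^ 2 + c < Fintype.card V)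
    (G : SimpleGraph V) [DecidableRel G.Adj] (hfree : ¬ ∃ F, G.IsPathFamily (m + 1) ℓ F)
    (hE : 2 * ((m + 1) * (ℓ / 2)) * Fintype.card V ≤
      ∑ v, G.degree v + 2 * Fintype.card V + c) :
    ∃ f : Fin m → Finset V, Pairwise (Disjoint on f) ∧
      ∀ i, Disjoint (f i) Y ∧ #(f i) = ℓ / 2 ∧ T ≤ (commonNbhd G (f i)).ncard := by
  induction m generalizing G with
  | zero => exact ⟨Fin.elim0, fun i => i.elim0, fun i => i.elim0⟩
  | succ m ih =>
  have : Nonempty V := Fintype.card_pos_iff.mp (by omega)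
  obtain ⟨S, hSY, hS, hST⟩ := exists_disjoint_card_eq_le_ncard_commonNbhd (by omega) hℓ hfree hY
    hE hn
  have hfree' : ¬ ∃ F, (G.isolate S).IsPathFamily (m + 1) ℓ F := fun ⟨_, hF⟩ =>
    hfree (hF.exists_succ_of_isolate hℓ hS.ge (by rw [add_mul] at hT; omega))
  have hE' : 2 * ((m + 1) * (ℓ / 2)) * Fintype.card V ≤
      ∑ v, (G.isolate S).degree v + 2 * Fintype.card V + c := by
    have := sum_degree_le_sum_degree_isolate_add_mul (G := G) S
    rw [hS] at this
    nlinarith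
  obtain ⟨f, hdisj, hf⟩ := ih (by nlinarith) (lt_of_le_of_lt (by gcongr; omega) hn) _ hfree' hE'
  have hSf : ∀ i, Disjoint S (f i) := fun i => by
    obtain ⟨w, hw⟩ := Set.nonempty_of_ncard_ne_zero (s := commonNbhd (G.isolate S) (f i))
      (by have := (hf i).2.2; nlinarith)
    exact Finset.disjoint_right.mpr fun v hv => (hw.2 v hv).2.2
  refine ⟨Fin.cons S f, fun i i' hii' => ?_, Fin.cases ⟨hSY, hS, hST⟩ fun i => ?_⟩
  · cases i using Fin.cases <;> cases i' using Fin.cases <;>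
      simp only [Function.onFun, Fin.cons_zero, Fin.cons_succ]
    · exact absurd rfl hii'
    · exact hSf _
    · exact (hSf _).symm
    · exact hdisj fun h => hii' (congrArg _ h)
  · obtain ⟨hfY, hfS, hfT⟩ := hf i
    exact ⟨hfY, hfS, hfT.trans (Set.ncard_le_ncard (commonNbhd_mono isolate_le _))⟩

def nkNat (n k ℓ : ℕ) : ℕ := n / (3 * ((ℓ - ℓ / 2 + 1) * ℓ.choose (ℓ / 2))) + k * ℓ + 1

theorem nkQ_le_nkNat (n k ℓ : ℕ) : nkQ n k ℓ ≤ nkNat n k ℓ := by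
  set E := (ℓ - ℓ / 2 + 1) * ℓ.choose (ℓ / 2)
  have hE : 0 < E := Nat.mul_pos (by omega) (Nat.choose_pos (Nat.div_le_self ℓ 2))
  have hden : ((((ℓ + 1) / 2 + 1 : ℕ) : ℚ) * (ℓ.choose (ℓ / 2) : ℚ)) = E := by
    simp [E, show (ℓ + 1) / 2 = ℓ - ℓ / 2 by omega]
  have hfloor : (n : ℚ) / (3 * E) ≤ (n / (3 * E) : ℕ) + 1 := by
    rw [div_le_iff₀ (by positivity)]
    exact_mod_cast (Nat.lt_mul_div_succ n (by omega : 0 < 3 * E)).le.trans_eq (by ring)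
  have : ((n : ℚ) / 3 - (ℓ.choose 2 : ℚ)) / E ≤ (n : ℚ) / (3 * E) := by
    rw [← div_div]
    gcongr
    exact sub_le_self _ (by positivity)
  rw [nkQ, hden, nkNat]
  push_cast
  linarith

theorem nkNat_mul_add_lt {n k ℓ r : ℕ} (hk : 1 ≤ k) (hℓ : 4 ≤ ℓ)
    (hn : 4 * k ^ 2 * ℓ ^ 2 * (k * ℓ + r) * (ℓ / 2 + 1) * ℓ.choose (ℓ / 2) ≤ n) :
    2 * (ℓ - ℓ / 2 + 1) * ℓ.choose (ℓ / 2) * nkNat n k ℓ + (k * ℓ) ^ 2 +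
      2 * (k * (ℓ / 2)) ^ 2 < n := by
  rw [nkNat]
  have hC := Nat.choose_pos (Nat.div_le_self ℓ 2)
  generalize ℓ.choose (ℓ / 2) = C at hC hn ⊢
  set E := (ℓ - ℓ / 2 + 1) * C
  set x := (ℓ / 2 + 1) * C
  set y := k * ℓ
  have hy : 4 ≤ y := by simpa using Nat.mul_le_mul hk hℓ
  have hx : 1 ≤ x := Nat.mul_pos (by omega) hC
  have hEx : E ≤ 2 * x := by
    simp only [E, x]
    rw [← mul_assoc]
    exact Nat.mul_le_mul_right _ (by omega)
  have hh : (2 * (k * (ℓ / 2))) ^ 2 ≤ y ^ 2 := by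
    refine Nat.pow_le_pow_left ?_ 2
    rw [mul_left_comm]
    exact Nat.mul_le_mul_left k (Nat.mul_div_le ℓ 2)
  have hq : 3 * (E * (n / (3 * E))) ≤ n := by
    rw [← mul_assoc]
    exact Nat.mul_div_le n (3 * E)
  have hn' : 4 * x * y ^ 3 ≤ n := by
    refine le_trans ?_ hn
    calc 4 * x * y ^ 3 = 4 * k ^ 2 * ℓ ^ 2 * y * (ℓ / 2 + 1) * C := by simp only [x, y]; ring
      _ ≤ _ := by gcongr; omega
  have h1 : 6 * E * (y + 1) ≤ 24 * x * y := by
    nlinarith [Nat.mul_le_mul hEx (show y + 1 ≤ 2 * y by omega)]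
  have h2 : 24 * x * y + 5 * y ^ 2 < 4 * x * y ^ 3 := by
    have : 16 * y ≤ y ^ 3 := by nlinarith
    nlinarith [Nat.mul_le_mul_left (x * y) this, Nat.mul_le_mul_left (y ^ 2) hx]
  have hsplit : 2 * (ℓ - ℓ / 2 + 1) * C * (n / (3 * E) + y + 1) =
      2 * (E * (n / (3 * E))) + 2 * E * (y + 1) := by
    simp only [E]
    ring
  rw [hsplit]
  nlinarith

theorem two_mul_mul_le_of_mul_le {a n e : ℕ} (h : (a - 1) * (n - a + 1) ≤ e) :
    2 * a * n ≤ 2 * e + 2 * n + 2 * a ^ 2 := by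
  rcases Nat.lt_or_ge n a with han | han
  · nlinarith
  rcases Nat.eq_zero_or_pos a with rfl | ha
  · simp
  zify [ha, han] at h ⊢
  nlinarith

theorem delete_vertices_still_kminus1_sets_general (k ℓ r n : ℕ)
    (hk : 2 ≤ k) (hℓ : 4 ≤ ℓ)
    (hn : 4 * k ^ 2 * ℓ ^ 2 * (k * ℓ + r) * (ℓ / 2 + 1) * ℓ.choose (ℓ / 2) ≤ n)
    (G : SimpleGraph (Fin n))
    (hfree : ¬ GContains G (kPaths k ℓ))
    (hE : (k * (ℓ / 2) - 1) * (n - k * (ℓ / 2) + 1) ≤ eCount G) :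
    ∀ X : Finset (Fin n), ↑X ⊆ bigA n k ℓ G → X.card < ℓ / 2 →
      ∃ f : Fin (k - 1) → Finset (Fin n),
        (∀ i j, i ≠ j → Disjoint (f i) (f j)) ∧
        ∀ i, ↑(f i) ⊆ bigA n k ℓ G \ ↑X ∧ (f i).card = ℓ / 2 ∧
          nkQ n k ℓ ≤ ((commonNbhd G ↑(f i)).ncard : ℚ) := by
  intro X _ hX
  classical
  obtain ⟨m, rfl⟩ : ∃ m, k = m + 1 := ⟨k - 1, by omega⟩
  rw [Nat.add_sub_cancel]
  rw [eCount, ← coe_edgeFinset, Set.ncard_coe_finset] at hE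
  have hdeg := two_mul_mul_le_of_mul_le hE
  rw [← sum_degrees_eq_twice_card_edges] at hdeg
  obtain ⟨f, hdisj, hf⟩ := exists_pairwise_disjoint_le_ncard_commonNbhd (by omega) hX m
    (T := nkNat n (m + 1) ℓ) (Nat.le_succ_of_le (Nat.le_add_left _ _))
    (by simpa using nkNat_mul_add_lt (by omega) hℓ hn) G
    (fun ⟨_, hF⟩ => hfree hF.gContains_kPaths) (by simpa using hdeg)
  refine ⟨f, fun i j hij => hdisj hij, fun i => ?_⟩
  obtain ⟨hfX, hfcard, hfN⟩ := hf i
  have hnk : nkQ n (m + 1) ℓ ≤ ((commonNbhd G ↑(f i)).ncard : ℚ) :=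
    (nkQ_le_nkNat n (m + 1) ℓ).trans (by exact_mod_cast hfN)
  exact ⟨fun v hv => ⟨⟨f i, hv, hfcard, hnk⟩, Finset.disjoint_left.mp hfX hv⟩, hfcard, hnk⟩

/-- Lemma 2.2: after deleting fewer than `⌊ℓ/2⌋` vertices of `A`, one can still find
`k−1` disjoint `⌊ℓ/2⌋`-sets in `A` with large common neighborhoods. -/
theorem delete_vertices_still_kminus1_sets (k ℓ r n : ℕ)
    (hk : 2 ≤ k) (hℓ : 4 ≤ ℓ) (hr : 3 ≤ r)
    (hn : 4 * k ^ 2 * ℓ ^ 2 * (k * ℓ + r) * (ℓ / 2 + 1) * ℓ.choose (ℓ / 2) ≤ n)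
    (G : SimpleGraph (Fin n))
    (hfree : ¬ GContains G (kPaths k ℓ))
    (hE : (k * (ℓ / 2) - 1) * (n - k * (ℓ / 2) + 1) ≤ eCount G) :
    ∀ X : Finset (Fin n), ↑X ⊆ bigA n k ℓ G → X.card < ℓ / 2 →
      ∃ f : Fin (k - 1) → Finset (Fin n),
        (∀ i j, i ≠ j → Disjoint (f i) (f j)) ∧
        ∀ i, ↑(f i) ⊆ bigA n k ℓ G \ ↑X ∧ (f i).card = ℓ / 2 ∧
          nkQ n k ℓ ≤ ((commonNbhd G ↑(f i)).ncard : ℚ) :=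
  delete_vertices_still_kminus1_sets_general k ℓ r n hk hℓ hn G hfree hE
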